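/- arXiv:1605.05577 — 5 statements merged into one kernel-verified Lean document; each statement's English description precedes it below -/
import Mathlib

section
/- Assume P(Z) has an orthant associated polyhedron Δ_P = dγ + ℝ_{≥0}^n, and write γ = β/q with β ∈ ℤ_{≥0}^n, q ∈ {1,…,d} and gcd(β₁,…,β_n,q) = 1. Then, substituting x_i ↦ x_i^q for each i and Z ↦ x^β Z, one has P(x₁^q,…,x_n^q, x^β Z) = x^{dβ}·(P̄(Z) + Q(x,Z)) for some polynomial Q(x,Z) ∈ (x₁,…,x_n)·k[[x]][Z] of degree < d in Z (i.e. every coefficient of Q lies in the maximal ideal (x₁,…,x_n) of k[[x]]). -/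
open Polynomial Pointwise
open scoped Classical

namespace IrredCrit

variable {n : ℕ} {k : Type*} [Field k]

/-- The coefficient `c_{α,j}` of `x^α Z^j` in `P`. -/
noncomputable def seriesCoeff (P : Polynomial (MvPowerSeries (Fin n) k))
    (α : Fin n →₀ ℕ) (j : ℕ) : k :=
  MvPowerSeries.coeff α (P.coeff j)

/-- The nonnegative orthant in `ℝ^n`. -/
def orthant (n : ℕ) : Set (Fin n → ℝ) := {v | ∀ i, 0 ≤ v i}

/-- The associated polyhedron `Δ_P`. -/
noncomputable def assocPolyhedron (P : Polynomial (MvPowerSeries (Fin n) k)) :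
    Set (Fin n → ℝ) :=
  convexHull ℝ {v : Fin n → ℝ | ∃ (α : Fin n →₀ ℕ) (j : ℕ), j < P.natDegree ∧
      seriesCoeff P α j ≠ 0 ∧
      v = fun i => (P.natDegree : ℝ) * (α i : ℝ) / ((P.natDegree : ℝ) - (j : ℝ))}
    + orthant n

/-- `P_In` for a polynomial with orthant associated polyhedron with vertex `dγ`. -/
noncomputable def PIn (P : Polynomial (MvPowerSeries (Fin n) k)) (d : ℕ)
    (γ : Fin n → ℚ) : Polynomial (MvPolynomial (Fin n) k) :=
  Polynomial.X ^ d + ∑ j ∈ Finset.range d,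
    Polynomial.C
      (if h : ∃ α : Fin n →₀ ℕ, ∀ i, (α i : ℚ) = ((d : ℚ) - (j : ℚ)) * γ i then
        MvPolynomial.monomial h.choose (seriesCoeff P h.choose j)
      else 0) * Polynomial.X ^ j

/-- `P̄(Z) = P_In(1,…,1,Z)`. -/
noncomputable def Pbar (P : Polynomial (MvPowerSeries (Fin n) k)) (d : ℕ)
    (γ : Fin n → ℚ) : Polynomial k :=
  (PIn P d γ).map (MvPolynomial.eval fun _ => (1 : k))

/-- The substitution `x_i ↦ x_i^q` on power series. -/
noncomputable def powSubst (q : ℕ) (f : MvPowerSeries (Fin n) k) :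
    MvPowerSeries (Fin n) k :=
  fun β : Fin n →₀ ℕ =>
    if h : ∃ α : Fin n →₀ ℕ, β = q • α then MvPowerSeries.coeff h.choose f else 0

/-- `P(x₁^q,…,x_n^q, x^β Z)`. -/
noncomputable def substQβ (q : ℕ) (β : Fin n →₀ ℕ)
    (P : Polynomial (MvPowerSeries (Fin n) k)) :
    Polynomial (MvPowerSeries (Fin n) k) :=
  ∑ j ∈ Finset.range (P.natDegree + 1),
    Polynomial.C (powSubst q (P.coeff j) *
      MvPowerSeries.monomial (R := k) (j • β) 1) * Polynomial.X ^ j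

/-!
Every term `c_{α,j} x^{qα + jβ} Z^j` of `P(x^q, x^β Z)` with `j < d` satisfies
`qα + jβ ≥ dβ` coordinatewise: the point `dα/(d - j)` lies in `Δ_P = dγ + ℝ^n_{≥0}`, so
`dα/(d - j) ≥ dβ/q`. Hence `x^{dβ}` divides every coefficient, and the constant term of the
quotient of the `j`-th coefficient is the coefficient of `x^{(d - j)β}` in `c_j(x^q)`, namely
`c_{α,j}` with `α = (d - j)γ`; these are exactly the coefficients of `P̄`.
-/

end IrredCrit

namespace MvPowerSeries

theorem monomial_one_dvd_of_coeff_ne_zero {σ R : Type*} [CommSemiring R] {m : σ →₀ ℕ}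
    {f : MvPowerSeries σ R} (h : ∀ e, coeff e f ≠ 0 → m ≤ e) : monomial m 1 ∣ f := by
  let g : MvPowerSeries σ R := fun e => coeff (e + m) f
  refine ⟨g, ?_⟩
  ext e
  rw [coeff_monomial_mul]
  split_ifs with hme
  · rw [one_mul]
    exact congrArg (coeff · f) (tsub_add_cancel_of_le hme).symm
  · by_contra hne
    exact hme (h e hne)

theorem exists_eq_C_monomial_mul_map_C_add {σ R : Type*} [CommRing R]
    (F : (MvPowerSeries σ R)[X]) (p : R[X]) (m : σ →₀ ℕ) (d : ℕ)
    (hdvd : ∀ j, monomial m 1 ∣ F.coeff j) (hcoeff : ∀ j, coeff m (F.coeff j) = p.coeff j)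
    (htop : ∀ j, d ≤ j → F.coeff j = C (p.coeff j) * monomial m 1) :
    ∃ Q : (MvPowerSeries σ R)[X], Q.degree < d ∧ (∀ j, constantCoeff (Q.coeff j) = 0) ∧
      F = Polynomial.C (monomial m 1) * (p.map C + Q) := by
  choose g hg using hdvd
  have hg0 (j : ℕ) : constantCoeff (g j) = p.coeff j := by
    rw [← hcoeff j, hg j, coeff_monomial_mul, if_pos le_rfl, tsub_self, one_mul,
      coeff_zero_eq_constantCoeff_apply]
  set Q := ∑ j ∈ Finset.range d, Polynomial.monomial j (g j - C (p.coeff j))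
  have hQ (j : ℕ) : Q.coeff j = if j < d then g j - C (p.coeff j) else 0 := by
    simp only [Q, Polynomial.finsetSum_coeff, Polynomial.coeff_monomial, Finset.sum_ite_eq',
      Finset.mem_range]
  refine ⟨Q, ?_, fun j => ?_, ?_⟩
  · rw [Polynomial.degree_lt_iff_coeff_zero]
    intro j hj
    rw [hQ, if_neg (not_lt.2 hj)]
  · rw [hQ]
    split_ifs
    · rw [map_sub, hg0, constantCoeff_C, sub_self]
    · exact map_zero _
  · ext j : 1
    rw [Polynomial.coeff_C_mul, Polynomial.coeff_add, Polynomial.coeff_map, hQ]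
    split_ifs with hj
    · rw [add_sub_cancel, hg]
    · rw [add_zero, htop j (not_lt.1 hj), mul_comm]

end MvPowerSeries

namespace IrredCrit

variable {n : ℕ} {k : Type*} [Field k]

theorem coeff_powSubst_smul {q : ℕ} (hq : q ≠ 0) (f : MvPowerSeries (Fin n) k)
    (α : Fin n →₀ ℕ) : MvPowerSeries.coeff (q • α) (powSubst q f) = MvPowerSeries.coeff α f := by
  have hα : ∃ α', q • α = q • α' := ⟨α, rfl⟩
  change dite _ _ _ = _
  rw [dif_pos hα, smul_right_injective _ hq hα.choose_spec.symm]

theorem coeff_powSubst_of_not_exists {q : ℕ} {e : Fin n →₀ ℕ} (he : ¬∃ α, e = q • α)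
    (f : MvPowerSeries (Fin n) k) : MvPowerSeries.coeff e (powSubst q f) = 0 :=
  dif_neg he

theorem exists_of_coeff_powSubst_ne_zero {q : ℕ} (hq : q ≠ 0) {e : Fin n →₀ ℕ}
    {f : MvPowerSeries (Fin n) k} (he : MvPowerSeries.coeff e (powSubst q f) ≠ 0) :
    ∃ α, e = q • α ∧ MvPowerSeries.coeff α f ≠ 0 := by
  by_cases hex : ∃ α, e = q • α
  · obtain ⟨α, rfl⟩ := hex
    exact ⟨α, rfl, by rwa [coeff_powSubst_smul hq] at he⟩
  · exact absurd (coeff_powSubst_of_not_exists hex f) he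

theorem powSubst_zero (q : ℕ) : powSubst q (0 : MvPowerSeries (Fin n) k) = 0 := by
  ext e
  change dite _ _ _ = _
  split <;> simp

theorem powSubst_one {q : ℕ} (hq : q ≠ 0) : powSubst q (1 : MvPowerSeries (Fin n) k) = 1 := by
  ext e
  by_cases he : ∃ α, e = q • α
  · obtain ⟨α, rfl⟩ := he
    simp only [coeff_powSubst_smul hq, MvPowerSeries.coeff_one, smul_eq_zero, hq, false_or]
  · rw [coeff_powSubst_of_not_exists he, MvPowerSeries.coeff_one, if_neg]
    rintro rfl
    exact he ⟨0, (smul_zero q).symm⟩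

theorem le_of_mem_singleton_add_orthant {a v : Fin n → ℝ} (hv : v ∈ {a} + orthant n) (i : Fin n) :
    a i ≤ v i := by
  obtain ⟨_, rfl, w, hw, rfl⟩ := hv
  simpa using hw i

theorem mem_assocPolyhedron {P : Polynomial (MvPowerSeries (Fin n) k)} {α : Fin n →₀ ℕ} {j : ℕ}
    (hj : j < P.natDegree) (hc : seriesCoeff P α j ≠ 0) :
    (fun i => (P.natDegree : ℝ) * α i / ((P.natDegree : ℝ) - j)) ∈ assocPolyhedron P :=
  ⟨_, subset_convexHull ℝ _ ⟨α, j, hj, hc, rfl⟩, 0, fun _ => le_rfl, add_zero _⟩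

theorem sub_smul_le_smul_of_seriesCoeff_ne_zero {P : Polynomial (MvPowerSeries (Fin n) k)}
    {d q j : ℕ} {γ : Fin n → ℚ} {β α : Fin n →₀ ℕ} (hdeg : P.natDegree = d)
    (hΔ : assocPolyhedron P = {fun i => (d : ℝ) * (γ i : ℝ)} + orthant n) (hq : q ≠ 0)
    (hγβ : ∀ i, γ i = (β i : ℚ) / q) (hj : j < d) (hc : seriesCoeff P α j ≠ 0) :
    (d - j) • β ≤ q • α := by
  have hmem := mem_assocPolyhedron (hdeg ▸ hj) hc
  rw [hΔ, hdeg] at hmem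
  refine Finsupp.le_def.mpr fun i => ?_
  have hvertex := le_of_mem_singleton_add_orthant hmem i
  have hγi : ((γ i : ℚ) : ℝ) = β i / q := by rw [hγβ i]; push_cast; ring
  have hq' : (0 : ℝ) < q := by positivity
  have hdj : (0 : ℝ) < d - j := sub_pos.mpr (by exact_mod_cast hj)
  have hd : (0 : ℝ) < d := by linarith [(Nat.cast_nonneg j : (0 : ℝ) ≤ j)]
  simp only [hγi, Finsupp.smul_apply, smul_eq_mul] at hvertex ⊢
  rw [← mul_div_assoc, div_le_div_iff₀ hq' hdj, mul_assoc, mul_assoc,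
    mul_le_mul_iff_right₀ hd] at hvertex
  rw [← Nat.cast_le (α := ℝ)]
  push_cast [Nat.cast_sub hj.le]
  linarith

theorem cast_eq_sub_mul_iff_sub_smul_eq {d q j : ℕ} {γ : Fin n → ℚ} {β α : Fin n →₀ ℕ}
    (hq : q ≠ 0) (hγβ : ∀ i, γ i = (β i : ℚ) / q) (hj : j ≤ d) :
    (∀ i, (α i : ℚ) = ((d : ℚ) - j) * γ i) ↔ (d - j) • β = q • α := by
  rw [Finsupp.ext_iff]
  refine forall_congr' fun i => ?_
  simp only [Finsupp.smul_apply, smul_eq_mul, hγβ i]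
  rw [← Nat.cast_inj (R := ℚ)]
  push_cast [Nat.cast_sub hj]
  field_simp
  exact eq_comm

theorem coeff_Pbar_of_lt (P : Polynomial (MvPowerSeries (Fin n) k)) (d : ℕ) (γ : Fin n → ℚ)
    {j : ℕ} (hj : j < d) :
    (Pbar P d γ).coeff j =
      if h : ∃ α : Fin n →₀ ℕ, ∀ i, (α i : ℚ) = ((d : ℚ) - j) * γ i then
        seriesCoeff P h.choose j
      else 0 := by
  simp only [Pbar, PIn, Polynomial.coeff_map, Polynomial.coeff_add, Polynomial.coeff_X_pow,
    hj.ne, if_false, zero_add, Polynomial.finsetSum_coeff, Polynomial.coeff_C_mul_X_pow,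
    Finset.sum_ite_eq, Finset.mem_range, if_true, hj]
  split <;> simp [MvPolynomial.eval_monomial]

theorem coeff_Pbar_self (P : Polynomial (MvPowerSeries (Fin n) k)) (d : ℕ) (γ : Fin n → ℚ) :
    (Pbar P d γ).coeff d = 1 := by
  simp [Pbar, PIn, Polynomial.coeff_X_pow, Polynomial.finsetSum_coeff]

theorem natDegree_Pbar_le (P : Polynomial (MvPowerSeries (Fin n) k)) (d : ℕ) (γ : Fin n → ℚ) :
    (Pbar P d γ).natDegree ≤ d := by
  rw [Polynomial.natDegree_le_iff_coeff_eq_zero]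
  intro j hj
  simp [Pbar, PIn, Polynomial.coeff_X_pow, Polynomial.finsetSum_coeff, hj.ne', hj.not_gt]

theorem coeff_Pbar_eq_coeff_powSubst (P : Polynomial (MvPowerSeries (Fin n) k)) {d q j : ℕ}
    {γ : Fin n → ℚ} {β : Fin n →₀ ℕ} (hq : q ≠ 0) (hγβ : ∀ i, γ i = (β i : ℚ) / q)
    (hj : j < d) :
    (Pbar P d γ).coeff j = MvPowerSeries.coeff ((d - j) • β) (powSubst q (P.coeff j)) := by
  rw [coeff_Pbar_of_lt P d γ hj]
  by_cases hex : ∃ α, (d - j) • β = q • α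
  · obtain ⟨α, hα⟩ := hex
    have hvertex : ∃ α : Fin n →₀ ℕ, ∀ i, (α i : ℚ) = ((d : ℚ) - j) * γ i :=
      ⟨α, (cast_eq_sub_mul_iff_sub_smul_eq hq hγβ hj.le).mpr hα⟩
    have hchoose : hvertex.choose = α := smul_right_injective _ hq <|
      ((cast_eq_sub_mul_iff_sub_smul_eq hq hγβ hj.le).mp hvertex.choose_spec).symm.trans hα
    rw [dif_pos hvertex, hα, coeff_powSubst_smul hq, hchoose, seriesCoeff]
  · rw [coeff_powSubst_of_not_exists hex, dif_neg]
    rintro ⟨α, hα⟩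
    exact hex ⟨α, (cast_eq_sub_mul_iff_sub_smul_eq hq hγβ hj.le).mp hα⟩

theorem coeff_substQβ (q : ℕ) (β : Fin n →₀ ℕ) (P : Polynomial (MvPowerSeries (Fin n) k))
    (j : ℕ) :
    (substQβ q β P).coeff j = powSubst q (P.coeff j) * MvPowerSeries.monomial (j • β) 1 := by
  simp only [substQβ, Polynomial.finsetSum_coeff, Polynomial.coeff_C_mul_X_pow,
    Finset.sum_ite_eq, Finset.mem_range]
  split_ifs with hj
  · rfl
  · rw [Polynomial.coeff_eq_zero_of_natDegree_lt (by omega), powSubst_zero, zero_mul]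

section KeyEquation

variable {P : Polynomial (MvPowerSeries (Fin n) k)} {d q : ℕ} {γ : Fin n → ℚ}
  {β : Fin n →₀ ℕ}

theorem coeff_substQβ_of_le (hmonic : P.Monic) (hdeg : P.natDegree = d) (hq : q ≠ 0) {j : ℕ}
    (hj : d ≤ j) :
    (substQβ q β P).coeff j =
      MvPowerSeries.C ((Pbar P d γ).coeff j) * MvPowerSeries.monomial (d • β) 1 := by
  rw [coeff_substQβ]
  obtain rfl | hj := hj.eq_or_lt
  · rw [← hdeg, hmonic.coeff_natDegree, powSubst_one hq, hdeg, coeff_Pbar_self,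
      map_one MvPowerSeries.C]
  · rw [Polynomial.coeff_eq_zero_of_natDegree_lt (hdeg ▸ hj), powSubst_zero,
      Polynomial.coeff_eq_zero_of_natDegree_lt ((natDegree_Pbar_le P d γ).trans_lt hj),
      map_zero, zero_mul, zero_mul]

theorem monomial_dvd_coeff_substQβ (hmonic : P.Monic) (hdeg : P.natDegree = d)
    (hΔ : assocPolyhedron P = {fun i => (d : ℝ) * (γ i : ℝ)} + orthant n) (hq : q ≠ 0)
    (hγβ : ∀ i, γ i = (β i : ℚ) / q) (j : ℕ) :
    MvPowerSeries.monomial (d • β) (1 : k) ∣ (substQβ q β P).coeff j := by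
  obtain hj | hj := lt_or_ge j d
  · rw [coeff_substQβ]
    refine MvPowerSeries.monomial_one_dvd_of_coeff_ne_zero fun e he => ?_
    rw [MvPowerSeries.coeff_mul_monomial] at he
    split_ifs at he with hle
    · rw [mul_one] at he
      obtain ⟨α, hα, hc⟩ := exists_of_coeff_powSubst_ne_zero hq he
      calc d • β = (d - j) • β + j • β := by rw [← add_smul, Nat.sub_add_cancel hj.le]
        _ ≤ q • α + j • β := add_le_add_left
            (sub_smul_le_smul_of_seriesCoeff_ne_zero hdeg hΔ hq hγβ hj hc) _
        _ = e := by rw [← hα, tsub_add_cancel_of_le hle]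
    · exact absurd rfl he
  · rw [coeff_substQβ_of_le (γ := γ) hmonic hdeg hq hj]
    exact dvd_mul_left _ _

theorem coeff_coeff_substQβ (hmonic : P.Monic) (hdeg : P.natDegree = d) (hq : q ≠ 0)
    (hγβ : ∀ i, γ i = (β i : ℚ) / q) (j : ℕ) :
    MvPowerSeries.coeff (d • β) ((substQβ q β P).coeff j) = (Pbar P d γ).coeff j := by
  obtain hj | hj := lt_or_ge j d
  · have hle : j • β ≤ d • β := smul_le_smul_of_nonneg_right hj.le zero_le
    have hsub : d • β - j • β = (d - j) • β := by ext i; simp [Nat.sub_mul]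
    rw [coeff_substQβ, MvPowerSeries.coeff_mul_monomial, if_pos hle, mul_one, hsub,
      coeff_Pbar_eq_coeff_powSubst P hq hγβ hj]
  · rw [coeff_substQβ_of_le hmonic hdeg hq hj, MvPowerSeries.coeff_C_mul,
      MvPowerSeries.coeff_monomial_same, mul_one]

end KeyEquation

theorem key_equation_general
    (P : Polynomial (MvPowerSeries (Fin n) k)) (d : ℕ)
    (hmonic : P.Monic) (hdeg : P.natDegree = d)
    (γ : Fin n → ℚ)
    (hΔ : assocPolyhedron P =
      {fun i => (d : ℝ) * (γ i : ℝ)} + orthant n)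
    (β : Fin n →₀ ℕ) (q : ℕ) (hq1 : 1 ≤ q)
    (hγβ : ∀ i, γ i = (β i : ℚ) / (q : ℚ)) :
    ∃ Q : Polynomial (MvPowerSeries (Fin n) k),
      Q.degree < d ∧
      (∀ j, MvPowerSeries.constantCoeff (σ := Fin n) (R := k) (Q.coeff j) = 0) ∧
      substQβ q β P =
        Polynomial.C (MvPowerSeries.monomial (R := k) (d • β) 1) *
          ((Pbar P d γ).map (MvPowerSeries.C (σ := Fin n) (R := k)) + Q) := by
  have hq : q ≠ 0 := Nat.one_le_iff_ne_zero.mp hq1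
  exact MvPowerSeries.exists_eq_C_monomial_mul_map_C_add _ _ _ _
    (monomial_dvd_coeff_substQβ hmonic hdeg hΔ hq hγβ)
    (coeff_coeff_substQβ hmonic hdeg hq hγβ)
    (fun _ => coeff_substQβ_of_le hmonic hdeg hq)

/-- **Key equation (2.1).** If `P` has an orthant associated polyhedron
`Δ_P = dγ + ℝ_{≥0}^n` with `γ = β/q`, `β ∈ ℤ_{≥0}^n`, `1 ≤ q ≤ d`,
`gcd(β₁,…,β_n,q) = 1`, then `P(x₁^q,…,x_n^q, x^β Z) = x^{dβ}·(P̄(Z) + Q(x,Z))` for some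
`Q(x,Z) ∈ (x₁,…,x_n)·k[[x]][Z]` of degree `< d` in `Z`. -/
theorem key_equation
    (P : Polynomial (MvPowerSeries (Fin n) k)) (d : ℕ) (hd : 1 ≤ d)
    (hmonic : P.Monic) (hdeg : P.natDegree = d) (hne : P ≠ Polynomial.X ^ d)
    (γ : Fin n → ℚ) (hγ : ∀ i, 0 ≤ γ i)
    (hΔ : assocPolyhedron P =
      {fun i => (d : ℝ) * (γ i : ℝ)} + orthant n)
    (β : Fin n →₀ ℕ) (q : ℕ) (hq1 : 1 ≤ q) (hqd : q ≤ d)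
    (hγβ : ∀ i, γ i = (β i : ℚ) / (q : ℚ))
    (hgcd : Nat.gcd (Finset.univ.gcd fun i => β i) q = 1) :
    ∃ Q : Polynomial (MvPowerSeries (Fin n) k),
      Q.degree < d ∧
      (∀ j, MvPowerSeries.constantCoeff (σ := Fin n) (R := k) (Q.coeff j) = 0) ∧
      substQβ q β P =
        Polynomial.C (MvPowerSeries.monomial (R := k) (d • β) 1) *
          ((Pbar P d γ).map (MvPowerSeries.C (σ := Fin n) (R := k)) + Q) :=
  key_equation_general P d hmonic hdeg γ hΔ β q hq1 hγβ

end IrredCrit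
end

section
/- Let k be an algebraically closed field of characteristic different from 2. Then the power series (x³ − y⁵)² − y¹¹ is not a square in k[[x,y]]: there is no h ∈ k[[x,y]] with h² = (x³ − y⁵)² − y¹¹. -/
/-!
Substitute `x ↦ t⁵`, `y ↦ t³`: these weights make `x³` and `y⁵` equal, so the square
`(x³ - y⁵)²` dies and `(x³ − y⁵)² − y¹¹` becomes `-t³³`. A square in `k[[x,y]]` would map to a
square in `k[[t]]`, whose order is even; but `-t³³` has order `33`.
-/

theorem ENat.even_natCast {n : ℕ} : Even (n : ℕ∞) ↔ Even n := by
  refine ⟨fun ⟨r, hr⟩ => ?_, fun h => h.natCast⟩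
  lift r to ℕ using by rintro rfl; simp at hr
  exact ⟨r, by exact_mod_cast hr⟩

namespace PowerSeries

variable {R : Type*} [Semiring R] [NoZeroDivisors R]

theorem even_order_of_isSquare {f : R⟦X⟧} (hf : IsSquare f) : Even f.order := by
  obtain ⟨r, rfl⟩ := hf
  exact ⟨r.order, order_mul r r⟩

theorem not_isSquare_of_order_eq_of_odd {f : R⟦X⟧} {n : ℕ} (hf : f.order = n) (hn : Odd n) :
    ¬ IsSquare f := fun hsq =>
  Nat.not_even_iff_odd.2 hn (ENat.even_natCast.1 (hf ▸ even_order_of_isSquare hsq))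

end PowerSeries

namespace MvPowerSeries

theorem HasSubst.powerSeries_X_pow_X_pow {S : Type*} [CommRing S] {m n : ℕ} (hm : m ≠ 0)
    (hn : n ≠ 0) : HasSubst ![(PowerSeries.X : PowerSeries S) ^ m, PowerSeries.X ^ n] :=
  hasSubst_of_constantCoeff_zero fun i => by fin_cases i <;> simp [PowerSeries.X, hm, hn]

theorem substAlgHom_sq_X_pow_sub_X_pow_sub_X_pow {R : Type*} [CommRing R] {a b : ℕ}
    (ha : a ≠ 0) (hb : b ≠ 0) (c : ℕ) :
    substAlgHom (R := R) (HasSubst.powerSeries_X_pow_X_pow (S := R) hb ha)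
      ((X 0 ^ a - X 1 ^ b) ^ 2 - X 1 ^ c) = -PowerSeries.X ^ (a * c) := by
  simp only [map_sub, map_pow, substAlgHom_X, Matrix.cons_val_zero, Matrix.cons_val_one,
    ← pow_mul, mul_comm b a, sub_self]
  ring

end MvPowerSeries

theorem not_isSquare_general {k : Type*} [Field k] :
    ¬ ∃ h : MvPowerSeries (Fin 2) k,
        h ^ 2 = (MvPowerSeries.X 0 ^ 3 - MvPowerSeries.X 1 ^ 5) ^ 2 -
          MvPowerSeries.X 1 ^ 11 := by
  rintro ⟨h, hh⟩
  let φ := MvPowerSeries.substAlgHom (R := k)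
    (MvPowerSeries.HasSubst.powerSeries_X_pow_X_pow (S := k) (m := 5) (n := 3)
      (by norm_num) (by norm_num))
  have hsq : IsSquare (-PowerSeries.X ^ 33 : PowerSeries k) := ⟨φ h, by
    rw [← sq, ← map_pow, hh,
      MvPowerSeries.substAlgHom_sq_X_pow_sub_X_pow_sub_X_pow (by norm_num) (by norm_num)]⟩
  exact PowerSeries.not_isSquare_of_order_eq_of_odd
    (by rw [PowerSeries.order_neg, PowerSeries.order_X_pow]) (by decide) hsq

/-- Over an algebraically closed field of characteristic different from 2, the power
series `(x³ − y⁵)² − y¹¹` is not a square in `k[[x,y]]`. -/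
theorem not_isSquare {k : Type*} [Field k] [IsAlgClosed k] (hchar : ringChar k ≠ 2) :
    ¬ ∃ h : MvPowerSeries (Fin 2) k,
        h ^ 2 = (MvPowerSeries.X 0 ^ 3 - MvPowerSeries.X 1 ^ 5) ^ 2 -
          MvPowerSeries.X 1 ^ 11 :=
  not_isSquare_general
end

section
/- Let k be an algebraically closed field of characteristic different from 2. Then the monic polynomial P(Z) := Z² − (x³ − y⁵)² + y¹¹ is irreducible in k[[x,y]][Z]. -/
/-!
With `f = x³ - y⁵`, a root `r` of `P` would give `(f - r)(f + r) = y¹¹`. Both factors lie in the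
maximal ideal of the local ring `k[[x,y]]` (as `r² = f² - y¹¹` does), so neither is a unit and,
`y` being prime, `y` divides both. Then `y ∣ 2f`, and since `2` is a unit, `y ∣ x³`, i.e. `y ∣ x`,
which is absurd.
-/

open Polynomial IsLocalRing

instance MvPowerSeries.instIsDomain {σ R : Type*} [Ring R] [IsDomain R] :
    IsDomain (MvPowerSeries σ R) :=
  NoZeroDivisors.to_isDomain _

theorem MvPowerSeries.prime_X {σ R : Type*} [CommRing R] [IsDomain R] (s : σ) :
    Prime (X s : MvPowerSeries σ R) := by
  classical
  let e := (renameEquiv R (Equiv.optionSubtypeNe s).symm).trans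
    (optionEquivLeft {t // t ≠ s} R)
  have he : e (X s) = PowerSeries.X := by
    simp [e]
  rw [← MulEquiv.prime_iff e.toMulEquiv]
  exact he ▸ PowerSeries.X_prime

theorem Prime.dvd_of_dvd_pow_of_not_isUnit {M : Type*} [CommMonoidWithZero M] [IsCancelMulZero M]
    {p a : M} {n : ℕ} (hp : Prime p) (ha : a ∣ p ^ n) (hu : ¬IsUnit a) : p ∣ a := by
  obtain ⟨i, -, hi⟩ := (dvd_prime_pow hp n).mp ha
  obtain ⟨j, rfl⟩ : ∃ j, i = j + 1 :=
    Nat.exists_eq_add_one.mpr (Nat.pos_of_ne_zero fun h => hu (by simpa [h] using hi))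
  exact (dvd_pow_self p j.succ_ne_zero).trans hi.symm.dvd

theorem MvPowerSeries.X_dvd_X_iff {σ R : Type*} [CommSemiring R] [Nontrivial R] {s t : σ} :
    (X t : MvPowerSeries σ R) ∣ X s ↔ t = s := by
  classical
  refine ⟨fun h => ?_, fun h => h ▸ dvd_rfl⟩
  by_contra hts
  have := X_dvd_iff.mp h (Finsupp.single s 1) (by simp [hts])
  simp [coeff_X] at this

theorem irreducible_X_sq_sub_C_sq_sub_pow {A : Type*} [CommRing A] [IsDomain A] [IsLocalRing A]
    {p f : A} {n : ℕ} (hp : Prime p) (hn : n ≠ 0) (hf : f ∈ maximalIdeal A) (hpf : ¬p ∣ f)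
    (h2 : IsUnit (2 : A)) : Irreducible (X ^ 2 - C (f ^ 2 - p ^ n)) := by
  have hmonic : (X ^ 2 - C (f ^ 2 - p ^ n)).Monic := monic_X_pow_sub_C _ two_ne_zero
  have hdeg : (X ^ 2 - C (f ^ 2 - p ^ n)).natDegree = 2 := natDegree_X_pow_sub_C
  rw [hmonic.irreducible_iff_roots_eq_zero_of_degree_le_three (by omega) (by omega),
    Multiset.eq_zero_iff_forall_notMem]
  intro r hroot
  have hr : r ^ 2 = f ^ 2 - p ^ n := by
    simpa [sub_eq_zero] using ((mem_roots hmonic.ne_zero).mp hroot).eq_zero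
  have hpm : p ∈ maximalIdeal A := hp.not_isUnit
  have hrm : r ∈ maximalIdeal A := by
    refine (maximalIdeal.isMaximal A).isPrime.mem_of_pow_mem 2 ?_
    rw [hr]
    exact sub_mem (Ideal.pow_mem_of_mem _ hf 2 two_pos) (Ideal.pow_mem_of_mem _ hpm n hn.bot_lt)
  have hprod : (f - r) * (f + r) = p ^ n := by linear_combination -hr
  have hminus : p ∣ f - r := hp.dvd_of_dvd_pow_of_not_isUnit (Dvd.intro _ hprod)
    (sub_mem hf hrm)
  have hplus : p ∣ f + r := hp.dvd_of_dvd_pow_of_not_isUnit (Dvd.intro_left _ hprod)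
    (add_mem hf hrm)
  refine hpf (h2.dvd_mul_left.mp ?_)
  simpa [two_mul] using dvd_add hminus hplus

theorem example_irreducible_general {k : Type*} [Field k]
    (hchar : ringChar k ≠ 2) :
    Irreducible (Polynomial.X ^ 2 -
        Polynomial.C ((MvPowerSeries.X 0 ^ 3 - MvPowerSeries.X 1 ^ 5) ^ 2) +
        Polynomial.C (MvPowerSeries.X 1 ^ 11) :
      Polynomial (MvPowerSeries (Fin 2) k)) := by
  set x : MvPowerSeries (Fin 2) k := MvPowerSeries.X 0
  set y : MvPowerSeries (Fin 2) k := MvPowerSeries.X 1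
  have hy : Prime y := MvPowerSeries.prime_X 1
  have hf : x ^ 3 - y ^ 5 ∈ maximalIdeal _ := by
    simp [MvPowerSeries.isUnit_iff_constantCoeff, x, y]
  have hyf : ¬y ∣ x ^ 3 - y ^ 5 := by
    intro h
    have hyx : y ∣ x := hy.dvd_of_dvd_pow ((dvd_sub_left (dvd_pow_self y (by norm_num))).mp h)
    exact one_ne_zero (MvPowerSeries.X_dvd_X_iff.mp hyx)
  have h2 : IsUnit (2 : MvPowerSeries (Fin 2) k) := by
    rw [MvPowerSeries.isUnit_iff_constantCoeff, map_ofNat]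
    exact (Ring.two_ne_zero hchar).isUnit
  convert irreducible_X_sq_sub_C_sq_sub_pow hy (by norm_num : 11 ≠ 0) hf hyf h2 using 1
  rw [C_sub]
  ring

/-- Over an algebraically closed field of characteristic different from 2, the monic
polynomial `P(Z) = Z² − (x³ − y⁵)² + y¹¹` is irreducible in `k[[x,y]][Z]`. -/
theorem example_irreducible {k : Type*} [Field k] [IsAlgClosed k]
    (hchar : ringChar k ≠ 2) :
    Irreducible (Polynomial.X ^ 2 -
        Polynomial.C ((MvPowerSeries.X 0 ^ 3 - MvPowerSeries.X 1 ^ 5) ^ 2) +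
        Polynomial.C (MvPowerSeries.X 1 ^ 11) :
      Polynomial (MvPowerSeries (Fin 2) k)) :=
  example_irreducible_general hchar
end

section
/- Let k be a field of characteristic different from 2 and let P(Z) := Z² − (x³ − y⁵)² + y¹¹ ∈ k[[x,y]][Z]. Then the associated polyhedron of P is Δ_P = convexHull{(6,0), (0,10)} + ℝ_{≥0}², which has the two distinct vertices (6,0) and (0,10); in particular there is no γ ∈ ℚ_{≥0}² such that Δ_P = 2γ + ℝ_{≥0}², i.e. P does not have an orthant associated polyhedron. -/
/-!
Here `P = Z² + c` with `c = y¹¹ - (x³ - y⁵)²`, so `Δ_P` is spanned by the exponents of `c`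
(the factor `d / (d - j)` equals `1` for `j = 0`). For the weights `(5, 3)` both `x³` and `y⁵`
have weight `15`, so every monomial of `c` has weight at least `30`, while `x⁶` and `y¹⁰` occur
with coefficient `-1`. Hence `Δ_P` is the region `5u + 3v ≥ 30` of the quadrant, whose corners
`(6, 0)` and `(0, 10)` are exposed points. A translated orthant has only one extreme point, so
`Δ_P` is not of that form.
-/

open Polynomial Pointwise
open scoped Classical

namespace IrredCrit

variable {n : ℕ} {k : Type*} [Field k]

theorem convex_orthant : Convex ℝ (orthant n) := fun _ hx _ hy _ _ ha hb _ i =>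
  add_nonneg (smul_nonneg ha (hx i)) (smul_nonneg hb (hy i))

theorem add_mem_orthant {v w : Fin n → ℝ} (hv : v ∈ orthant n) (hw : w ∈ orthant n) :
    v + w ∈ orthant n :=
  fun i => add_nonneg (hv i) (hw i)

theorem convexHull_add_orthant_eq_of_subset {S T : Set (Fin n → ℝ)} (hTS : T ⊆ S)
    (hST : S ⊆ convexHull ℝ T + orthant n) :
    convexHull ℝ S + orthant n = convexHull ℝ T + orthant n := by
  refine Set.Subset.antisymm ?_ (Set.add_subset_add_right (convexHull_mono hTS))
  have hS : convexHull ℝ S ⊆ convexHull ℝ T + orthant n :=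
    convexHull_min hST ((convex_convexHull ℝ T).add convex_orthant)
  rintro _ ⟨p, hp, w, hw, rfl⟩
  obtain ⟨q, hq, u, hu, rfl⟩ := hS hp
  exact ⟨q, hq, u + w, add_mem_orthant hu hw, (add_assoc q u w).symm⟩

theorem eq_of_mem_extremePoints_singleton_add_orthant {g x : Fin n → ℝ}
    (hx : x ∈ Set.extremePoints ℝ ({g} + orthant n)) : x = g := by
  rw [Set.singleton_add] at hx
  obtain ⟨⟨w, hw, rfl⟩, hext⟩ := hx
  have hg : g ∈ (g + ·) '' orthant n := ⟨0, fun _ => le_rfl, add_zero g⟩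
  have hg2w : g + 2 • w ∈ (g + ·) '' orthant n := ⟨2 • w, fun i => by simpa using hw i, rfl⟩
  have hmid : g + w ∈ openSegment ℝ g (g + 2 • w) :=
    ⟨1 / 2, 1 / 2, by norm_num, by norm_num, by norm_num, by module⟩
  exact (hext hg hg2w hmid).symm

def regionAboveSegment (a b : ℝ) : Set (Fin 2 → ℝ) :=
  {x | 0 ≤ x 0 ∧ 0 ≤ x 1 ∧ a * b ≤ b * x 0 + a * x 1}

section RegionAboveSegment

variable {a b : ℝ}

theorem mem_regionAboveSegment {x : Fin 2 → ℝ} :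
    x ∈ regionAboveSegment a b ↔ 0 ≤ x 0 ∧ 0 ≤ x 1 ∧ a * b ≤ b * x 0 + a * x 1 :=
  Iff.rfl

theorem convexHull_pair_add_orthant (ha : 0 < a) (hb : 0 < b) :
    convexHull ℝ {![a, 0], ![0, b]} + orthant 2 = regionAboveSegment a b := by
  ext x
  constructor
  · rintro ⟨_, hp, w, hw, rfl⟩
    obtain ⟨s, t, hs, ht, hst, rfl⟩ := (convexHull_pair (𝕜 := ℝ) _ _).subset hp
    have hw0 := hw 0
    have hw1 := hw 1
    simp only [mem_regionAboveSegment, Pi.add_apply, Pi.smul_apply, smul_eq_mul,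
      Matrix.cons_val_zero, Matrix.cons_val_one]
    have hab : a * b = a * b * (s + t) := by rw [hst, mul_one]
    refine ⟨by positivity, by positivity, ?_⟩
    linarith [mul_nonneg hb.le hw0, mul_nonneg ha.le hw1]
  · rintro ⟨hx0, hx1, hx⟩
    rcases le_or_gt a (x 0) with hax | hxa
    · refine ⟨![a, 0], subset_convexHull ℝ _ (Set.mem_insert _ _), x - ![a, 0], ?_,
        add_sub_cancel _ _⟩
      exact Fin.forall_fin_two.2 ⟨by simpa using hax, by simpa using hx1⟩
    · have ht1 : x 0 / a ≤ 1 := (div_le_one ha).2 hxa.le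
      have hx1t : (1 - x 0 / a) * b ≤ x 1 := by
        field_simp
        linarith
      set t := x 0 / a
      refine ⟨t • ![a, 0] + (1 - t) • ![0, b], ?_, x - (t • ![a, 0] + (1 - t) • ![0, b]), ?_,
        add_sub_cancel _ _⟩
      · rw [convexHull_pair]
        exact ⟨t, 1 - t, by positivity, by linarith, by ring, rfl⟩
      · exact Fin.forall_fin_two.2
          ⟨by simp [t, div_mul_cancel₀ _ ha.ne'], by simpa using hx1t⟩

theorem mem_extremePoints_regionAboveSegment_left (ha : 0 < a) (hb : 0 < b) :
    ![a, 0] ∈ Set.extremePoints ℝ (regionAboveSegment a b) := by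
  refine exposedPoints_subset_extremePoints ⟨⟨?_, le_rfl, ?_⟩,
    -(b • ContinuousLinearMap.proj 0 + (2 * a) • ContinuousLinearMap.proj 1), ?_⟩
  · simp [ha.le]
  · simp [mul_comm]
  · rintro y ⟨hy0, hy1, hy⟩
    simp only [neg_add_rev, add_apply, neg_apply, smul_apply, ContinuousLinearMap.proj_apply,
      smul_eq_mul, Matrix.cons_val_zero, Matrix.cons_val_one, mul_zero]
    have hay1 := mul_nonneg ha.le hy1
    refine ⟨by linarith, fun hle => ?_⟩
    have hy1' : y 1 = 0 := (mul_eq_zero.mp (by linarith : a * y 1 = 0)).resolve_left ha.ne'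
    have hy0' : y 0 = a := mul_left_cancel₀ hb.ne' (by linarith)
    ext i
    fin_cases i <;> simp [hy0', hy1']

theorem mem_extremePoints_regionAboveSegment_right (ha : 0 < a) (hb : 0 < b) :
    ![0, b] ∈ Set.extremePoints ℝ (regionAboveSegment a b) := by
  refine exposedPoints_subset_extremePoints ⟨⟨le_rfl, ?_, ?_⟩,
    -((2 * b) • ContinuousLinearMap.proj 0 + a • ContinuousLinearMap.proj 1), ?_⟩
  · simp [hb.le]
  · simp
  · rintro y ⟨hy0, hy1, hy⟩
    simp only [neg_add_rev, add_apply, neg_apply, smul_apply, ContinuousLinearMap.proj_apply,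
      smul_eq_mul, Matrix.cons_val_zero, Matrix.cons_val_one, mul_zero]
    have hby0 := mul_nonneg hb.le hy0
    refine ⟨by linarith, fun hle => ?_⟩
    have hy0' : y 0 = 0 := (mul_eq_zero.mp (by linarith : b * y 0 = 0)).resolve_left hb.ne'
    have hy1' : y 1 = b := mul_left_cancel₀ ha.ne' (by linarith)
    ext i
    fin_cases i <;> simp [hy0', hy1']

end RegionAboveSegment

theorem assocPolyhedron_X_pow_add_C {d : ℕ} (hd : d ≠ 0) (c : MvPowerSeries (Fin n) k) :
    assocPolyhedron (X ^ d + C c) =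
      convexHull ℝ ((fun α i => (α i : ℝ)) '' {α | MvPowerSeries.coeff α c ≠ 0}) + orthant n := by
  rw [assocPolyhedron, natDegree_X_pow_add_C]
  congr 2
  ext v
  constructor
  · rintro ⟨α, j, hj, hα, rfl⟩
    obtain rfl : j = 0 := by
      by_contra hj0
      simp [seriesCoeff, coeff_X_pow, hj.ne, hj0, coeff_C] at hα
    refine ⟨α, by simpa [seriesCoeff, hd.symm] using hα, ?_⟩
    ext i
    simp [hd]
  · rintro ⟨α, hα, rfl⟩
    refine ⟨α, 0, Nat.pos_of_ne_zero hd, by simpa [seriesCoeff, hd.symm] using hα, ?_⟩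
    ext i
    simp [hd]

theorem _root_.MvPowerSeries.le_weightedOrder_X_pow {σ R : Type*} [CommSemiring R]
    (w : σ → ℕ) (i : σ) (m : ℕ) :
    ((m * w i : ℕ) : ℕ∞) ≤
      MvPowerSeries.weightedOrder w (MvPowerSeries.X i ^ m : MvPowerSeries σ R) := by
  classical
  rw [MvPowerSeries.X_pow_eq, MvPowerSeries.weightedOrder_monomial]
  split_ifs
  · exact le_top
  · simp [Finsupp.weight_single]

theorem _root_.MvPowerSeries.min_weightedOrder_le_sub {σ R : Type*} [CommRing R] (w : σ → ℕ)
    (f g : MvPowerSeries σ R) :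
    min (f.weightedOrder w) (g.weightedOrder w) ≤ (f - g).weightedOrder w := by
  rw [sub_eq_add_neg, ← MvPowerSeries.weightedOrder_neg w g]
  exact MvPowerSeries.min_weightedOrder_le_add w

section ExampleConstCoeff

open MvPowerSeries

variable (R : Type*) [CommRing R]

noncomputable def exampleConstCoeff : MvPowerSeries (Fin 2) R :=
  X 1 ^ 11 - (X 0 ^ 3 - X 1 ^ 5) ^ 2

theorem exampleConstCoeff_eq :
    exampleConstCoeff R = X 1 ^ 11 - X 0 ^ 6 - X 1 ^ 10 + (2 : R) • (X 0 ^ 3 * X 1 ^ 5) := by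
  rw [exampleConstCoeff, two_smul]
  ring

theorem coeff_single_zero_six_exampleConstCoeff :
    coeff (Finsupp.single 0 6) (exampleConstCoeff R) = -1 := by
  rw [exampleConstCoeff_eq]
  simp [X_pow_eq, MvPowerSeries.coeff_mul_monomial, MvPowerSeries.coeff_monomial,
    Finsupp.single_le_iff, Finsupp.single_eq_single_iff]

theorem coeff_single_one_ten_exampleConstCoeff :
    coeff (Finsupp.single 1 10) (exampleConstCoeff R) = -1 := by
  rw [exampleConstCoeff_eq]
  simp [X_pow_eq, MvPowerSeries.coeff_mul_monomial, MvPowerSeries.coeff_monomial,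
    Finsupp.single_le_iff, Finsupp.single_eq_single_iff, ← Finsupp.single_tsub]

theorem le_weightedOrder_exampleConstCoeff : 30 ≤ weightedOrder ![5, 3] (exampleConstCoeff R) := by
  have h15 : (15 : ℕ∞) ≤ weightedOrder ![5, 3] (X 0 ^ 3 - X 1 ^ 5 : MvPowerSeries (Fin 2) R) :=
    (min_weightedOrder_le_sub _ _ _).trans'
      (le_min (le_weightedOrder_X_pow _ 0 3) (le_weightedOrder_X_pow _ 1 5))
  have h30 := (le_weightedOrder_pow ![5, 3] 2).trans' (nsmul_le_nsmul_right h15 2)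
  exact (min_weightedOrder_le_sub _ _ _).trans'
    (le_min ((le_weightedOrder_X_pow _ 1 11).trans' (by norm_num)) h30)

theorem le_of_coeff_exampleConstCoeff_ne_zero {α : Fin 2 →₀ ℕ}
    (h : coeff α (exampleConstCoeff R) ≠ 0) : 30 ≤ 5 * α 0 + 3 * α 1 := by
  have := (weightedOrder_le ![5, 3] h).trans' (le_weightedOrder_exampleConstCoeff R)
  rw [Finsupp.weight_apply,
    Finsupp.sum_fintype _ (fun i c => c • ![5, 3] i) (fun _ => zero_smul ℕ _), Fin.sum_univ_two]
    at this
  simp only [smul_eq_mul, Matrix.cons_val_zero, Matrix.cons_val_one] at this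
  norm_cast at this
  omega

end ExampleConstCoeff

theorem assocPolyhedron_X_sq_add_C_exampleConstCoeff :
    assocPolyhedron (X ^ 2 + C (exampleConstCoeff k)) =
      convexHull ℝ {![6, 0], ![0, 10]} + orthant 2 := by
  rw [assocPolyhedron_X_pow_add_C two_ne_zero]
  apply convexHull_add_orthant_eq_of_subset
  · rintro _ (rfl | rfl)
    · refine ⟨Finsupp.single 0 6, by simp [coeff_single_zero_six_exampleConstCoeff], ?_⟩
      ext i
      fin_cases i <;> simp
    · refine ⟨Finsupp.single 1 10, by simp [coeff_single_one_ten_exampleConstCoeff], ?_⟩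
      ext i
      fin_cases i <;> simp
  · rw [convexHull_pair_add_orthant (by norm_num) (by norm_num)]
    rintro _ ⟨α, hα, rfl⟩
    have h30 : (30 : ℝ) ≤ 5 * α 0 + 3 * α 1 := by
      exact_mod_cast le_of_coeff_exampleConstCoeff_ne_zero k hα
    exact ⟨by positivity, by positivity, by linarith⟩

theorem example_assocPolyhedron_general {k : Type*} [Field k]
    (P : Polynomial (MvPowerSeries (Fin 2) k))
    (hP : P = Polynomial.X ^ 2 -
        Polynomial.C ((MvPowerSeries.X 0 ^ 3 - MvPowerSeries.X 1 ^ 5) ^ 2) +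
        Polynomial.C (MvPowerSeries.X 1 ^ 11)) :
    assocPolyhedron P =
        convexHull ℝ {(![6, 0] : Fin 2 → ℝ), ![0, 10]} + orthant 2 ∧
      (![6, 0] : Fin 2 → ℝ) ≠ ![0, 10] ∧
      (![6, 0] : Fin 2 → ℝ) ∈ Set.extremePoints ℝ (assocPolyhedron P) ∧
      (![0, 10] : Fin 2 → ℝ) ∈ Set.extremePoints ℝ (assocPolyhedron P) ∧
      ¬ ∃ γ : Fin 2 → ℚ, (∀ i, 0 ≤ γ i) ∧
        assocPolyhedron P = {fun i => (2 : ℝ) * (γ i : ℝ)} + orthant 2 := by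
  have hPc : P = X ^ 2 + C (exampleConstCoeff k) := by
    rw [hP, exampleConstCoeff, map_sub]
    ring
  have hΔ : assocPolyhedron P = convexHull ℝ {![6, 0], ![0, 10]} + orthant 2 := by
    rw [hPc, assocPolyhedron_X_sq_add_C_exampleConstCoeff]
  have hR := hΔ.trans (convexHull_pair_add_orthant (by norm_num) (by norm_num))
  have h60 : ![6, 0] ∈ Set.extremePoints ℝ (assocPolyhedron P) :=
    hR ▸ mem_extremePoints_regionAboveSegment_left (by norm_num) (by norm_num)
  have h010 : ![0, 10] ∈ Set.extremePoints ℝ (assocPolyhedron P) :=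
    hR ▸ mem_extremePoints_regionAboveSegment_right (by norm_num) (by norm_num)
  have hne : (![6, 0] : Fin 2 → ℝ) ≠ ![0, 10] := fun h => by simpa using congr_fun h 0
  refine ⟨hΔ, hne, h60, h010, ?_⟩
  rintro ⟨γ, -, hγ⟩
  rw [hγ] at h60 h010
  exact hne ((eq_of_mem_extremePoints_singleton_add_orthant h60).trans
    (eq_of_mem_extremePoints_singleton_add_orthant h010).symm)

/-- For `P(Z) = Z² − (x³ − y⁵)² + y¹¹` over a field of characteristic `≠ 2`, the
associated polyhedron is `Δ_P = conv{(6,0),(0,10)} + ℝ_{≥0}²`, with the two distinct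
vertices `(6,0)` and `(0,10)`; in particular `P` does not have an orthant associated
polyhedron. -/
theorem example_assocPolyhedron {k : Type*} [Field k] (hchar : ringChar k ≠ 2)
    (P : Polynomial (MvPowerSeries (Fin 2) k))
    (hP : P = Polynomial.X ^ 2 -
        Polynomial.C ((MvPowerSeries.X 0 ^ 3 - MvPowerSeries.X 1 ^ 5) ^ 2) +
        Polynomial.C (MvPowerSeries.X 1 ^ 11)) :
    assocPolyhedron P =
        convexHull ℝ {(![6, 0] : Fin 2 → ℝ), ![0, 10]} + orthant 2 ∧
      (![6, 0] : Fin 2 → ℝ) ≠ ![0, 10] ∧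
      (![6, 0] : Fin 2 → ℝ) ∈ Set.extremePoints ℝ (assocPolyhedron P) ∧
      (![0, 10] : Fin 2 → ℝ) ∈ Set.extremePoints ℝ (assocPolyhedron P) ∧
      ¬ ∃ γ : Fin 2 → ℚ, (∀ i, 0 ≤ γ i) ∧
        assocPolyhedron P = {fun i => (2 : ℝ) * (γ i : ℝ)} + orthant 2 :=
  example_assocPolyhedron_general P hP

end IrredCrit
end

section
/- Let k be an algebraically closed field of characteristic different from 2 and let P(Z) := Z² − (x³ − y⁵)² + y¹¹ ∈ k[[x,y]][Z]. Then P is irreducible in k[[x,y]][Z], yet for every ω ∈ ℝ_{>0}² the initial form In_{ω'}(P) is the product of two coprime monic polynomials of degree 1 in Z with coefficients in k[x,y]. In particular, the conclusion of the irreducibility criterion (that In_{ω'}(P) is not a product of two coprime polynomials) fails for polynomials that do not have an orthant associated polyhedron. -/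
open Polynomial Pointwise
open scoped Classical

namespace IrredCrit

variable {n : ℕ} {k : Type*} [Field k]

/-- `ω_{n+1}`, the last component of `ω'`. -/
noncomputable def omegaLast (R : Polynomial (MvPowerSeries (Fin n) k))
    (ω : Fin n → ℝ) : ℝ :=
  sInf {t : ℝ | ∃ (α : Fin n →₀ ℕ) (j : ℕ), j < R.natDegree ∧
    seriesCoeff R α j ≠ 0 ∧ t = (∑ i, (α i : ℝ) * ω i) / ((R.natDegree : ℝ) - (j : ℝ))}

/-- The `j`-th coefficient of the initial form `In_{ω'}(R)`. -/
noncomputable def initCoeff (R : Polynomial (MvPowerSeries (Fin n) k))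
    (ω : Fin n → ℝ) (j : ℕ) : MvPowerSeries (Fin n) k :=
  fun α : Fin n →₀ ℕ =>
    if (∑ i, (α i : ℝ) * ω i) + (j : ℝ) * omegaLast R ω
        = (R.natDegree : ℝ) * omegaLast R ω then seriesCoeff R α j else 0

/-- The initial form `In_{ω'}(R)` of a monic polynomial. -/
noncomputable def initForm (R : Polynomial (MvPowerSeries (Fin n) k))
    (ω : Fin n → ℝ) : Polynomial (MvPowerSeries (Fin n) k) :=
  Polynomial.X ^ R.natDegree + ∑ j ∈ Finset.range R.natDegree,
    Polynomial.C (initCoeff R ω j) * Polynomial.X ^ j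

/-!
A factorization of `P = Z² - g`, `g = (x³ - y⁵)² - y¹¹`, would make `g` a square. The
parametrization `x = t⁵, y = t³` of the cusp `x³ = y⁵` kills `(x³ - y⁵)²` and sends `g` to
`-t³³`, of odd order, whereas squares have even order.

The constant term of `P` is `-x⁶ + 2x³y⁵ - y¹⁰ + y¹¹`, and `y¹¹` is always strictly heavier than
`y¹⁰`. Hence `In_{ω'}(P) = Z² - q²` where `q` is the `ω`-initial part of `x³ - y⁵` (`x³`,
`x³ - y⁵` or `-y⁵`), and `Z - q`, `Z + q` are coprime because `2q ≠ 0`.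
-/

theorem _root_.Polynomial.irreducible_X_sq_sub_C {R : Type*} [CommRing R] [NoZeroDivisors R]
    [Nontrivial R] {a : R} (ha : ¬IsSquare a) : Irreducible (X ^ 2 - C a) := by
  have hmonic : (X ^ 2 - C a).Monic := monic_X_pow_sub_C a two_ne_zero
  rw [← not_not (a := Irreducible _),
    hmonic.not_irreducible_iff_exists_add_mul_eq_coeff natDegree_X_pow_sub_C]
  rintro ⟨c₁, c₂, h₀, h₁⟩
  simp only [coeff_sub, coeff_X_pow, coeff_C, OfNat.zero_ne_ofNat, OfNat.one_ne_ofNat,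
    if_false, if_true, zero_sub, one_ne_zero, sub_zero] at h₀ h₁
  exact ha ⟨c₁, by linear_combination -h₀ + c₁ * h₁⟩

theorem _root_.Polynomial.isRelPrime_X_sub_C_X_sub_C {R : Type*} [CommRing R] [IsDomain R]
    {a b : R} (hab : a ≠ b) : IsRelPrime (X - C a) (X - C b) := by
  rw [(irreducible_X_sub_C a).isRelPrime_iff_not_dvd, dvd_iff_isRoot, IsRoot, eval_sub, eval_X,
    eval_C, sub_eq_zero]
  exact hab

theorem _root_.PowerSeries.even_order_of_isSquare_s16 {R : Type*} [Semiring R] [NoZeroDivisors R]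
    {φ : PowerSeries R} (h : IsSquare φ) : Even φ.order := by
  obtain ⟨ψ, rfl⟩ := h
  exact ⟨ψ.order, PowerSeries.order_mul ψ ψ⟩

theorem _root_.MvPowerSeries.ne_zero_or_ne_zero_of_coeff_add {σ R : Type*} [Semiring R]
    {f g : MvPowerSeries σ R} {α : σ →₀ ℕ} (h : MvPowerSeries.coeff α (f + g) ≠ 0) :
    MvPowerSeries.coeff α f ≠ 0 ∨ MvPowerSeries.coeff α g ≠ 0 := by
  by_contra! h'
  simp [h'.1, h'.2] at h

section WeightedSupport

variable {σ R : Type*} [Fintype σ] [Semiring R]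

def IsWeightedHomogeneous (ω : σ → ℝ) (m : ℝ) (f : MvPowerSeries σ R) : Prop :=
  ∀ α, MvPowerSeries.coeff α f ≠ 0 → ∑ i, (α i : ℝ) * ω i = m

def WeightedOrderGT (ω : σ → ℝ) (m : ℝ) (f : MvPowerSeries σ R) : Prop :=
  ∀ α, MvPowerSeries.coeff α f ≠ 0 → m < ∑ i, (α i : ℝ) * ω i

variable {ω : σ → ℝ} {m : ℝ}

theorem IsWeightedHomogeneous.add {f g : MvPowerSeries σ R} (hf : IsWeightedHomogeneous ω m f)
    (hg : IsWeightedHomogeneous ω m g) : IsWeightedHomogeneous ω m (f + g) := fun α h =>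
  (MvPowerSeries.ne_zero_or_ne_zero_of_coeff_add h).elim (hf α) (hg α)

theorem WeightedOrderGT.add {f g : MvPowerSeries σ R} (hf : WeightedOrderGT ω m f)
    (hg : WeightedOrderGT ω m g) : WeightedOrderGT ω m (f + g) := fun α h =>
  (MvPowerSeries.ne_zero_or_ne_zero_of_coeff_add h).elim (hf α) (hg α)

theorem isWeightedHomogeneous_monomial {β : σ →₀ ℕ} (c : R) (h : ∑ i, (β i : ℝ) * ω i = m) :
    IsWeightedHomogeneous ω m (MvPowerSeries.monomial β c) :=
  fun _ hα => MvPowerSeries.eq_of_coeff_monomial_ne_zero hα ▸ h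

theorem IsWeightedHomogeneous.coeff_eq_zero {f : MvPowerSeries σ R}
    (hf : IsWeightedHomogeneous ω m f) {α : σ →₀ ℕ} (hα : ∑ i, (α i : ℝ) * ω i ≠ m) :
    MvPowerSeries.coeff α f = 0 := by
  by_contra h
  exact hα (hf α h)

theorem WeightedOrderGT.coeff_eq_zero {f : MvPowerSeries σ R} (hf : WeightedOrderGT ω m f)
    {α : σ →₀ ℕ} (hα : ∑ i, (α i : ℝ) * ω i = m) : MvPowerSeries.coeff α f = 0 := by
  by_contra h
  exact (hf α h).ne' hα

theorem weightedOrderGT_monomial {β : σ →₀ ℕ} (c : R) (h : m < ∑ i, (β i : ℝ) * ω i) :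
    WeightedOrderGT ω m (MvPowerSeries.monomial β c) := fun α hα =>
  isWeightedHomogeneous_monomial c rfl α hα ▸ h

end WeightedSupport

section InitialForm

variable {n d : ℕ} {ω : Fin n → ℝ} {m : ℝ} {c f₀ f₁ : MvPowerSeries (Fin n) k}

theorem coeff_X_pow_add_C_of_pos_of_lt {j : ℕ} (hj : 0 < j) (hjd : j < d) :
    (X ^ d + C c).coeff j = 0 := by
  rw [coeff_add, coeff_X_pow, coeff_C, if_neg hjd.ne, if_neg hj.ne', add_zero]

theorem initCoeff_X_pow_add_C_of_pos_of_lt {j : ℕ} (hj : 0 < j) (hjd : j < d) :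
    initCoeff (X ^ d + C c) ω j = 0 := by
  ext α
  rw [map_zero, MvPowerSeries.coeff_apply, initCoeff, seriesCoeff,
    coeff_X_pow_add_C_of_pos_of_lt hj hjd, map_zero, ite_self]

theorem omegaLast_X_pow_add_C (hd : 0 < d) (hf₀ : f₀ ≠ 0) (h₀ : IsWeightedHomogeneous ω m f₀)
    (h₁ : WeightedOrderGT ω m f₁) : omegaLast (X ^ d + C (f₀ + f₁)) ω = m / d := by
  have hcoeff0 : (X ^ d + C (f₀ + f₁)).coeff 0 = f₀ + f₁ := by simp [hd.ne]
  apply IsLeast.csInf_eq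
  constructor
  · obtain ⟨α, hα⟩ : ∃ α, MvPowerSeries.coeff α f₀ ≠ 0 := by
      by_contra! h
      exact hf₀ (MvPowerSeries.ext h)
    refine ⟨α, 0, by rwa [natDegree_X_pow_add_C], ?_, ?_⟩
    · rwa [seriesCoeff, hcoeff0, map_add, h₁.coeff_eq_zero (h₀ α hα), add_zero]
    · rw [h₀ α hα, natDegree_X_pow_add_C, Nat.cast_zero, sub_zero]
  · rintro t ⟨α, j, hj, hne, rfl⟩
    rw [natDegree_X_pow_add_C] at hj ⊢
    obtain rfl : j = 0 := by
      by_contra hj0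
      exact hne (by
        rw [seriesCoeff, coeff_X_pow_add_C_of_pos_of_lt (Nat.pos_of_ne_zero hj0) hj, map_zero])
    rw [seriesCoeff, hcoeff0] at hne
    have hwt : m ≤ ∑ i, (α i : ℝ) * ω i :=
      (MvPowerSeries.ne_zero_or_ne_zero_of_coeff_add hne).elim (fun h => (h₀ α h).ge)
        (fun h => (h₁ α h).le)
    rw [Nat.cast_zero, sub_zero]
    gcongr

theorem initCoeff_X_pow_add_C_zero (hd : 0 < d) (hf₀ : f₀ ≠ 0)
    (h₀ : IsWeightedHomogeneous ω m f₀) (h₁ : WeightedOrderGT ω m f₁) :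
    initCoeff (X ^ d + C (f₀ + f₁)) ω 0 = f₀ := by
  ext α
  rw [MvPowerSeries.coeff_apply, initCoeff, seriesCoeff, omegaLast_X_pow_add_C hd hf₀ h₀ h₁,
    natDegree_X_pow_add_C, coeff_add, coeff_X_pow, if_neg hd.ne, zero_add, coeff_C_zero, map_add]
  have hcond : ∑ i, (α i : ℝ) * ω i + ((0 : ℕ) : ℝ) * (m / d) = d * (m / d) ↔
      ∑ i, (α i : ℝ) * ω i = m := by
    rw [Nat.cast_zero, zero_mul, add_zero, mul_div_cancel₀ _ (by positivity)]
  by_cases hα : ∑ i, (α i : ℝ) * ω i = m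
  · rw [if_pos (hcond.2 hα), h₁.coeff_eq_zero hα, add_zero]
  · rw [if_neg (hcond.not.2 hα), h₀.coeff_eq_zero hα]

/-- `ω₃ = m / d`, and the monomials reaching it are exactly those of `f₀`. -/
theorem initForm_X_pow_add_C (hd : 0 < d) (hf₀ : f₀ ≠ 0) (h₀ : IsWeightedHomogeneous ω m f₀)
    (h₁ : WeightedOrderGT ω m f₁) : initForm (X ^ d + C (f₀ + f₁)) ω = X ^ d + C f₀ := by
  obtain ⟨d, rfl⟩ := Nat.exists_eq_add_of_lt hd
  rw [initForm, natDegree_X_pow_add_C, Finset.sum_range_succ',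
    Finset.sum_eq_zero (fun j hj => ?_), initCoeff_X_pow_add_C_zero hd hf₀ h₀ h₁]
  · simp
  · rw [initCoeff_X_pow_add_C_of_pos_of_lt j.succ_pos (by have := Finset.mem_range.1 hj; omega),
      map_zero, zero_mul]

theorem initForm_eq_X_sq_sub_C_sq {q : MvPolynomial (Fin n) k} (hq : q ≠ 0) (hc : c = f₀ + f₁)
    (hqf₀ : f₀ = -(q : MvPowerSeries (Fin n) k) ^ 2) (h₀ : IsWeightedHomogeneous ω m f₀)
    (h₁ : WeightedOrderGT ω m f₁) :
    initForm (X ^ 2 + C c) ω = X ^ 2 - C ((q : MvPowerSeries (Fin n) k) ^ 2) := by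
  have hf₀ : f₀ ≠ 0 := by
    rw [hqf₀, neg_ne_zero]
    exact pow_ne_zero _ ((MvPolynomial.coe_eq_zero_iff).not.2 hq)
  rw [hc, initForm_X_pow_add_C two_pos hf₀ h₀ h₁, hqf₀, map_neg, sub_eq_add_neg]

end InitialForm

theorem exists_isRelPrime_factorization {σ : Type*} (h2 : (2 : k) ≠ 0) {q : MvPolynomial σ k}
    (hq : q ≠ 0) :
    ∃ A B : Polynomial (MvPolynomial σ k),
      A.Monic ∧ B.Monic ∧ A.natDegree = 1 ∧ B.natDegree = 1 ∧ IsRelPrime A B ∧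
      X ^ 2 - C ((q : MvPowerSeries σ k) ^ 2) =
        A.map MvPolynomial.coeToMvPowerSeries.ringHom *
          B.map MvPolynomial.coeToMvPowerSeries.ringHom := by
  refine ⟨X - C q, X - C (-q), monic_X_sub_C _, monic_X_sub_C _, natDegree_X_sub_C _,
    natDegree_X_sub_C _, isRelPrime_X_sub_C_X_sub_C ?_, ?_⟩
  · intro h
    have h2q : (2 : MvPolynomial σ k) * q = 0 := by linear_combination h
    have h2' : (2 : MvPolynomial σ k) ≠ 0 := by
      rwa [← map_ofNat MvPolynomial.C 2, Ne, MvPolynomial.C_eq_zero]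
    exact mul_ne_zero h2' hq h2q
  · simp only [Polynomial.map_sub, Polynomial.map_X, Polynomial.map_C, Polynomial.map_neg, map_neg,
      MvPolynomial.coeToMvPowerSeries.ringHom_apply, map_pow]
    ring

section Example

variable {ω : Fin 2 → ℝ} {m : ℝ}

noncomputable def xyMonomial (a b : ℕ) (c : k) : MvPowerSeries (Fin 2) k :=
  MvPowerSeries.monomial (Finsupp.single 0 a + Finsupp.single 1 b) c

theorem weight_single_add_single (a b : ℕ) :
    ∑ i, ((Finsupp.single 0 a + Finsupp.single 1 b : Fin 2 →₀ ℕ) i : ℝ) * ω i =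
      a * ω 0 + b * ω 1 := by
  simp [Fin.sum_univ_two]

theorem isWeightedHomogeneous_xyMonomial {a b : ℕ} (c : k) (h : a * ω 0 + b * ω 1 = m) :
    IsWeightedHomogeneous ω m (xyMonomial a b c) :=
  isWeightedHomogeneous_monomial c (by rwa [weight_single_add_single])

theorem weightedOrderGT_xyMonomial {a b : ℕ} (c : k) (h : m < a * ω 0 + b * ω 1) :
    WeightedOrderGT ω m (xyMonomial a b c) :=
  weightedOrderGT_monomial c (by rwa [weight_single_add_single])

theorem xyMonomial_eq (a b : ℕ) (c : k) :
    xyMonomial a b c = MvPowerSeries.C c * MvPowerSeries.X 0 ^ a * MvPowerSeries.X 1 ^ b := by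
  rw [xyMonomial, MvPowerSeries.X_pow_eq, MvPowerSeries.X_pow_eq,
    ← MvPowerSeries.monomial_zero_eq_C_apply, MvPowerSeries.monomial_mul_monomial,
    MvPowerSeries.monomial_mul_monomial, zero_add, mul_one, mul_one]

theorem hasSubst_X_pow_five_X_pow_three :
    MvPowerSeries.HasSubst (![PowerSeries.X ^ 5, PowerSeries.X ^ 3] : Fin 2 → PowerSeries k) :=
  MvPowerSeries.hasSubst_of_constantCoeff_zero (by intro s; fin_cases s <;> simp [PowerSeries.X])

noncomputable def cuspParam : MvPowerSeries (Fin 2) k →ₐ[k] PowerSeries k :=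
  MvPowerSeries.substAlgHom hasSubst_X_pow_five_X_pow_three

theorem cuspParam_X_zero :
    cuspParam (MvPowerSeries.X 0 : MvPowerSeries (Fin 2) k) = PowerSeries.X ^ 5 :=
  MvPowerSeries.substAlgHom_X _ 0

theorem cuspParam_X_one :
    cuspParam (MvPowerSeries.X 1 : MvPowerSeries (Fin 2) k) = PowerSeries.X ^ 3 :=
  MvPowerSeries.substAlgHom_X _ 1

theorem not_isSquare_sq_sub_X_pow_eleven :
    ¬IsSquare ((MvPowerSeries.X 0 ^ 3 - MvPowerSeries.X 1 ^ 5) ^ 2 - MvPowerSeries.X 1 ^ 11 :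
      MvPowerSeries (Fin 2) k) := by
  intro h
  have hparam : cuspParam ((MvPowerSeries.X 0 ^ 3 - MvPowerSeries.X 1 ^ 5) ^ 2 -
      MvPowerSeries.X 1 ^ 11 : MvPowerSeries (Fin 2) k) = -PowerSeries.X ^ 33 := by
    simp only [map_sub, map_pow, cuspParam_X_zero, cuspParam_X_one]
    ring
  have heven := PowerSeries.even_order_of_isSquare_s16 (h.map cuspParam)
  rw [hparam, PowerSeries.order_neg, PowerSeries.order_X_pow] at heven
  obtain ⟨r, hr⟩ := heven
  induction r using ENat.recTopCoe with
  | top => simp at hr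
  | coe r => norm_cast at hr; omega

theorem eq_X_sq_add_C_sum_xyMonomial {P : Polynomial (MvPowerSeries (Fin 2) k)}
    (hP : P = X ^ 2 - C ((MvPowerSeries.X 0 ^ 3 - MvPowerSeries.X 1 ^ 5) ^ 2) +
      C (MvPowerSeries.X 1 ^ 11)) :
    P = X ^ 2 + C (xyMonomial 6 0 (-1) + xyMonomial 3 5 2 + xyMonomial 0 10 (-1) +
      xyMonomial 0 11 1) := by
  rw [hP, sub_add, ← map_sub, sub_eq_add_neg, ← map_neg]
  congr 2
  simp only [xyMonomial_eq, map_neg, map_one, map_ofNat]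
  ring

theorem exists_initForm_eq_X_sq_sub_C_sq {P : Polynomial (MvPowerSeries (Fin 2) k)}
    (hP : P = X ^ 2 - C ((MvPowerSeries.X 0 ^ 3 - MvPowerSeries.X 1 ^ 5) ^ 2) +
      C (MvPowerSeries.X 1 ^ 11)) (hω₁ : 0 < ω 1) :
    ∃ q : MvPolynomial (Fin 2) k, q ≠ 0 ∧
      initForm P ω = X ^ 2 - C ((q : MvPowerSeries (Fin 2) k) ^ 2) := by
  rw [eq_X_sq_add_C_sum_xyMonomial hP]
  rcases lt_trichotomy (3 * ω 0) (5 * ω 1) with h | h | h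
  · have hq : (MvPolynomial.X 0 ^ 3 : MvPolynomial (Fin 2) k) ≠ 0 :=
      pow_ne_zero _ (MvPolynomial.X_ne_zero 0)
    refine ⟨_, hq, initForm_eq_X_sq_sub_C_sq hq (m := 6 * ω 0) (f₀ := xyMonomial 6 0 (-1))
      (f₁ := xyMonomial 3 5 2 + xyMonomial 0 10 (-1) + xyMonomial 0 11 1) (by ring) ?_
      (isWeightedHomogeneous_xyMonomial _ (by push_cast; ring)) ?_⟩
    · simp only [xyMonomial_eq, MvPolynomial.coe_pow, MvPolynomial.coe_X, map_neg, map_one]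
      ring
    · refine .add (.add ?_ ?_) ?_ <;> exact weightedOrderGT_xyMonomial _ (by push_cast; linarith)
  · have hq : (MvPolynomial.X 0 ^ 3 - MvPolynomial.X 1 ^ 5 : MvPolynomial (Fin 2) k) ≠ 0 := by
      rw [sub_ne_zero, MvPolynomial.X_pow_eq_monomial, MvPolynomial.X_pow_eq_monomial, Ne,
        MvPolynomial.monomial_left_inj one_ne_zero, Finsupp.single_eq_single_iff]
      simp
    refine ⟨_, hq, initForm_eq_X_sq_sub_C_sq hq (m := 6 * ω 0)
      (f₀ := xyMonomial 6 0 (-1) + xyMonomial 3 5 2 + xyMonomial 0 10 (-1))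
      (f₁ := xyMonomial 0 11 1) (by ring) ?_ ?_
      (weightedOrderGT_xyMonomial _ (by push_cast; linarith))⟩
    · rw [← MvPolynomial.coeToMvPowerSeries.ringHom_apply]
      simp only [xyMonomial_eq, map_sub, map_pow, MvPolynomial.coeToMvPowerSeries.ringHom_apply,
        MvPolynomial.coe_X, map_neg, map_one, map_ofNat]
      ring
    · refine .add (.add ?_ ?_) ?_ <;>
        exact isWeightedHomogeneous_xyMonomial _ (by push_cast; linarith)
  · have hq : (MvPolynomial.X 1 ^ 5 : MvPolynomial (Fin 2) k) ≠ 0 :=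
      pow_ne_zero _ (MvPolynomial.X_ne_zero 1)
    refine ⟨_, hq, initForm_eq_X_sq_sub_C_sq hq (m := 10 * ω 1) (f₀ := xyMonomial 0 10 (-1))
      (f₁ := xyMonomial 6 0 (-1) + xyMonomial 3 5 2 + xyMonomial 0 11 1) (by ring) ?_
      (isWeightedHomogeneous_xyMonomial _ (by push_cast; ring)) ?_⟩
    · simp only [xyMonomial_eq, MvPolynomial.coe_pow, MvPolynomial.coe_X, map_neg, map_one]
      ring
    · refine .add (.add ?_ ?_) ?_ <;> exact weightedOrderGT_xyMonomial _ (by push_cast; linarith)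

end Example

theorem example_counterexample_general {k : Type*} [Field k]
    (hchar : ringChar k ≠ 2)
    (P : Polynomial (MvPowerSeries (Fin 2) k))
    (hP : P = Polynomial.X ^ 2 -
        Polynomial.C ((MvPowerSeries.X 0 ^ 3 - MvPowerSeries.X 1 ^ 5) ^ 2) +
        Polynomial.C (MvPowerSeries.X 1 ^ 11)) :
    Irreducible P ∧
      ∀ ω : Fin 2 → ℝ, 0 < ω 0 → 0 < ω 1 →
        ∃ A B : Polynomial (MvPolynomial (Fin 2) k),
          A.Monic ∧ B.Monic ∧ A.natDegree = 1 ∧ B.natDegree = 1 ∧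
          IsRelPrime A B ∧
          initForm P ω =
            A.map MvPolynomial.coeToMvPowerSeries.ringHom *
              B.map MvPolynomial.coeToMvPowerSeries.ringHom := by
  refine ⟨?_, fun ω _ hω₁ => ?_⟩
  · rw [hP, sub_add, ← map_sub]
    exact irreducible_X_sq_sub_C not_isSquare_sq_sub_X_pow_eleven
  · obtain ⟨q, hq, hform⟩ := exists_initForm_eq_X_sq_sub_C_sq hP hω₁
    rw [hform]
    exact exists_isRelPrime_factorization (Ring.two_ne_zero hchar) hq

/-- Over an algebraically closed field of characteristic `≠ 2`, the polynomial
`P(Z) = Z² − (x³ − y⁵)² + y¹¹` is irreducible in `k[[x,y]][Z]`, yet for every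
`ω ∈ ℝ_{>0}²` the initial form `In_{ω'}(P)` is the product of two coprime monic
polynomials of degree `1` in `Z` with coefficients in `k[x,y]`. -/
theorem example_counterexample {k : Type*} [Field k] [IsAlgClosed k]
    (hchar : ringChar k ≠ 2)
    (P : Polynomial (MvPowerSeries (Fin 2) k))
    (hP : P = Polynomial.X ^ 2 -
        Polynomial.C ((MvPowerSeries.X 0 ^ 3 - MvPowerSeries.X 1 ^ 5) ^ 2) +
        Polynomial.C (MvPowerSeries.X 1 ^ 11)) :
    Irreducible P ∧
      ∀ ω : Fin 2 → ℝ, 0 < ω 0 → 0 < ω 1 →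
        ∃ A B : Polynomial (MvPolynomial (Fin 2) k),
          A.Monic ∧ B.Monic ∧ A.natDegree = 1 ∧ B.natDegree = 1 ∧
          IsRelPrime A B ∧
          initForm P ω =
            A.map MvPolynomial.coeToMvPowerSeries.ringHom *
              B.map MvPolynomial.coeToMvPowerSeries.ringHom :=
  example_counterexample_general hchar P hP

end IrredCrit
end
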